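/- Under the hypotheses of Theorem 1 (transmission constants 0 < α ≤ β for φ, condition numbers of all W_l, W̃_l, ΔW_l bounded by κ), the hidden activations satisfy for every l: ‖h̃_l(x)‖₂ / ‖h_l(x)‖₂ ≤ (β κ²/α)^l · ∏_{k=1}^{l} (1 + ‖ΔW_k‖_F/‖W_k‖_F), where h_l and h̃_l are the hidden layers of the original and perturbed multilayer perceptrons. -/

import Mathlib

open Finset

/-- Euclidean norm of a vector. -/
noncomputable def enorm {m : ℕ} (v : Fin m → ℝ) : ℝ :=
  Real.sqrt (∑ i, v i ^ 2)

/-- Frobenius norm of a matrix. -/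
noncomputable def frob {a b : ℕ} (M : Matrix (Fin a) (Fin b) ℝ) : ℝ :=
  Real.sqrt (∑ i, ∑ j, M i j ^ 2)

/-- `M` has all singular values positive and condition number (ratio of largest to
smallest singular value) at most `κ`. -/
def HasCondLE {a b : ℕ} (M : Matrix (Fin a) (Fin b) ℝ) (κ : ℝ) : Prop :=
  ∃ σmin σmax : ℝ, 0 < σmin ∧ σmax ≤ κ * σmin ∧
    ∀ v : Fin b → ℝ, σmin * _root_.enorm v ≤ _root_.enorm (M.mulVec v) ∧
      _root_.enorm (M.mulVec v) ≤ σmax * _root_.enorm v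

/-- Hidden layers of a multilayer perceptron:
`h 0 x = x`, `h (l+1) x = φ(W l · h l x)` with `φ` applied elementwise. -/
noncomputable def mlpHidden (φ : ℝ → ℝ) (n : ℕ → ℕ)
    (W : ∀ l : ℕ, Matrix (Fin (n (l + 1))) (Fin (n l)) ℝ)
    (x : Fin (n 0) → ℝ) : ∀ l : ℕ, Fin (n l) → ℝ
  | 0 => x
  | l + 1 => fun i => φ ((W l).mulVec (mlpHidden φ n W x l) i)


/-!
Each layer multiplies the norm of the perturbed activation by at most `β ‖W + ΔW‖₂` and that of
the unperturbed one by at least `α σ_min(W)`. Since the Frobenius norm of a `b`-column matrix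
lies between `√b σ_min` and `√b σ_max`, the condition-number bound gives
`‖W‖₂ + ‖ΔW‖₂ ≤ κ² σ_min(W) (1 + ‖ΔW‖_F / ‖W‖_F)`, so the ratio of the two activation norms grows
by at most `(β κ² / α) (1 + ‖ΔW‖_F / ‖W‖_F)` per layer.
-/

open Matrix

namespace MLP

section EuclideanNorm

variable {m : ℕ}

lemma enorm_eq_norm_toLp (v : Fin m → ℝ) : _root_.enorm v = ‖WithLp.toLp 2 v‖ := by
  simp only [_root_.enorm, EuclideanSpace.norm_eq, Real.norm_eq_abs, sq_abs]

lemma enorm_nonneg (v : Fin m → ℝ) : 0 ≤ _root_.enorm v := Real.sqrt_nonneg _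

lemma enorm_pos {v : Fin m → ℝ} (hv : v ≠ 0) : 0 < _root_.enorm v := by
  rw [enorm_eq_norm_toLp, norm_pos_iff]
  exact fun h => hv (congrArg WithLp.ofLp h)

lemma enorm_add_le (u v : Fin m → ℝ) :
    _root_.enorm (u + v) ≤ _root_.enorm u + _root_.enorm v := by
  simpa only [enorm_eq_norm_toLp, WithLp.toLp_add] using norm_add_le _ _

lemma enorm_smul (c : ℝ) (v : Fin m → ℝ) : _root_.enorm (c • v) = |c| * _root_.enorm v := by
  simp only [enorm_eq_norm_toLp, WithLp.toLp_smul, norm_smul, Real.norm_eq_abs]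

lemma enorm_mono {u v : Fin m → ℝ} (h : ∀ i, |u i| ≤ |v i|) :
    _root_.enorm u ≤ _root_.enorm v :=
  Real.sqrt_le_sqrt <| Finset.sum_le_sum fun i _ => sq_le_sq.mpr (h i)

lemma enorm_le_mul_of_abs_le {u v : Fin m → ℝ} {c : ℝ} (hc : 0 ≤ c)
    (h : ∀ i, |u i| ≤ c * |v i|) : _root_.enorm u ≤ c * _root_.enorm v := by
  rw [← abs_of_nonneg hc, ← enorm_smul]
  refine enorm_mono fun i => ?_
  simpa only [Pi.smul_apply, smul_eq_mul, abs_mul, abs_of_nonneg hc] using h i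

lemma mul_enorm_le_of_mul_abs_le {u v : Fin m → ℝ} {c : ℝ} (hc : 0 ≤ c)
    (h : ∀ i, c * |v i| ≤ |u i|) : c * _root_.enorm v ≤ _root_.enorm u := by
  rw [← abs_of_nonneg hc, ← enorm_smul]
  refine enorm_mono fun i => ?_
  simpa only [Pi.smul_apply, smul_eq_mul, abs_mul, abs_of_nonneg hc] using h i

lemma enorm_single (j : Fin m) : _root_.enorm (Pi.single j (1 : ℝ)) = 1 := by
  simp [_root_.enorm, Pi.single_apply]

end EuclideanNorm

lemma nonneg_of_abs_le_mul_abs {f : ℝ → ℝ} {β : ℝ} (h : ∀ x, |f x| ≤ β * |x|) : 0 ≤ β := by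
  simpa using (abs_nonneg _).trans (h 1)

section Frobenius

variable {a b : ℕ}

lemma frob_nonneg (M : Matrix (Fin a) (Fin b) ℝ) : 0 ≤ frob M := Real.sqrt_nonneg _

lemma frob_eq_sqrt_sum_enorm_col (M : Matrix (Fin a) (Fin b) ℝ) :
    frob M = Real.sqrt (∑ j, _root_.enorm (M *ᵥ Pi.single j 1) ^ 2) := by
  simp only [frob, _root_.enorm, Matrix.mulVec_single_one, Matrix.col_apply]
  rw [Finset.sum_comm]
  congr 1
  exact Finset.sum_congr rfl fun j _ => (Real.sq_sqrt (by positivity)).symm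

lemma sqrt_card_mul_le_frob (M : Matrix (Fin a) (Fin b) ℝ) {σ : ℝ} (hσ : 0 ≤ σ)
    (h : ∀ v, σ * _root_.enorm v ≤ _root_.enorm (M *ᵥ v)) :
    Real.sqrt b * σ ≤ frob M := by
  rw [frob_eq_sqrt_sum_enorm_col, ← Real.sqrt_sq hσ, ← Real.sqrt_mul (Nat.cast_nonneg b)]
  refine Real.sqrt_le_sqrt ?_
  calc (b : ℝ) * σ ^ 2 = ∑ _j : Fin b, σ ^ 2 := by simp
    _ ≤ _ := Finset.sum_le_sum fun j _ =>
      pow_le_pow_left₀ hσ (by simpa [enorm_single] using h (Pi.single j 1)) 2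

lemma frob_le_sqrt_card_mul (M : Matrix (Fin a) (Fin b) ℝ) {σ : ℝ} (hσ : 0 ≤ σ)
    (h : ∀ v, _root_.enorm (M *ᵥ v) ≤ σ * _root_.enorm v) :
    frob M ≤ Real.sqrt b * σ := by
  rw [frob_eq_sqrt_sum_enorm_col, ← Real.sqrt_sq hσ, ← Real.sqrt_mul (Nat.cast_nonneg b)]
  refine Real.sqrt_le_sqrt ?_
  calc ∑ j, _root_.enorm (M *ᵥ Pi.single j 1) ^ 2 ≤ ∑ _j : Fin b, σ ^ 2 :=
        Finset.sum_le_sum fun j _ =>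
          pow_le_pow_left₀ (enorm_nonneg _) (by simpa [enorm_single] using h (Pi.single j 1)) 2
    _ = b * σ ^ 2 := by simp

end Frobenius

lemma _root_.HasCondLE.exists_enorm_add_mulVec_le {a b : ℕ} {W ΔW : Matrix (Fin a) (Fin b) ℝ}
    {κ : ℝ} (hW : HasCondLE W κ) (hΔW : HasCondLE ΔW κ) (hb : 0 < b) :
    ∃ s > 0, (∀ v, s * _root_.enorm v ≤ _root_.enorm (W *ᵥ v)) ∧
      ∀ v, _root_.enorm ((W + ΔW) *ᵥ v) ≤
        κ ^ 2 * (1 + frob ΔW / frob W) * s * _root_.enorm v := by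
  obtain ⟨s, S, hs, hSs, hWv⟩ := hW
  obtain ⟨t, T, ht, hTt, hΔWv⟩ := hΔW
  have hsS : s ≤ S := by
    simpa [enorm_single] using (hWv (Pi.single ⟨0, hb⟩ 1)).1.trans (hWv (Pi.single ⟨0, hb⟩ 1)).2
  have hκ : 1 ≤ κ := by nlinarith
  have hsqrt : 0 < Real.sqrt b := Real.sqrt_pos.mpr (Nat.cast_pos.mpr hb)
  have hfW : 0 < frob W :=
    (mul_pos hsqrt hs).trans_le (sqrt_card_mul_le_frob W hs.le fun v => (hWv v).1)
  have hT : T ≤ κ ^ 2 * s * (frob ΔW / frob W) := by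
    rw [mul_div_assoc', le_div_iff₀ hfW]
    have hfrobW : frob W ≤ Real.sqrt b * (κ * s) :=
      (frob_le_sqrt_card_mul W (hs.le.trans hsS) fun v => (hWv v).2).trans (by gcongr)
    calc T * frob W ≤ (κ * t) * (Real.sqrt b * (κ * s)) :=
          mul_le_mul hTt hfrobW hfW.le (by positivity)
      _ = κ ^ 2 * s * (Real.sqrt b * t) := by ring
      _ ≤ κ ^ 2 * s * frob ΔW := by
          gcongr
          exact sqrt_card_mul_le_frob ΔW ht.le fun v => (hΔWv v).1
  have hS : S ≤ κ ^ 2 * s := by nlinarith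
  refine ⟨s, hs, fun v => (hWv v).1, fun v => ?_⟩
  calc _root_.enorm ((W + ΔW) *ᵥ v) ≤ _root_.enorm (W *ᵥ v) + _root_.enorm (ΔW *ᵥ v) := by
        rw [Matrix.add_mulVec]; exact enorm_add_le _ _
    _ ≤ (S + T) * _root_.enorm v := by linarith [(hWv v).2, (hΔWv v).2]
    _ ≤ κ ^ 2 * (1 + frob ΔW / frob W) * s * _root_.enorm v := by
        gcongr ?_ * _
        · exact enorm_nonneg v
        · linarith

lemma enorm_layer_ratio_le {a b : ℕ} {φ : ℝ → ℝ} {α β κ : ℝ} (hα : 0 < α)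
    (hφ : ∀ x : ℝ, α * |x| ≤ |φ x| ∧ |φ x| ≤ β * |x|)
    {W ΔW : Matrix (Fin a) (Fin b) ℝ} (hW : HasCondLE W κ) (hΔW : HasCondLE ΔW κ)
    {v : Fin b → ℝ} (hv : v ≠ 0) (u : Fin b → ℝ) :
    _root_.enorm (fun i => φ (((W + ΔW) *ᵥ u) i)) / _root_.enorm (fun i => φ ((W *ᵥ v) i)) ≤
      β * κ ^ 2 / α * (1 + frob ΔW / frob W) * (_root_.enorm u / _root_.enorm v) := by
  have hb : 0 < b := Nat.pos_of_ne_zero (by rintro rfl; exact hv (Subsingleton.elim _ _))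
  obtain ⟨s, hs, hlow, hup⟩ := hW.exists_enorm_add_mulVec_le hΔW hb
  have hβ : 0 ≤ β := nonneg_of_abs_le_mul_abs fun x => (hφ x).2
  have hnum : _root_.enorm (fun i => φ (((W + ΔW) *ᵥ u) i)) ≤
      β * (κ ^ 2 * (1 + frob ΔW / frob W) * s * _root_.enorm u) :=
    (enorm_le_mul_of_abs_le hβ fun i => (hφ _).2).trans (mul_le_mul_of_nonneg_left (hup u) hβ)
  have hden : α * (s * _root_.enorm v) ≤ _root_.enorm (fun i => φ ((W *ᵥ v) i)) :=
    (mul_le_mul_of_nonneg_left (hlow v) hα.le).trans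
      (mul_enorm_le_of_mul_abs_le hα.le fun i => (hφ _).1)
  have hv' : 0 < _root_.enorm v := enorm_pos hv
  calc _ ≤ β * (κ ^ 2 * (1 + frob ΔW / frob W) * s * _root_.enorm u) /
        (α * (s * _root_.enorm v)) :=
        div_le_div₀ ((enorm_nonneg _).trans hnum) hnum (by positivity) hden
    _ = β * κ ^ 2 / α * (1 + frob ΔW / frob W) * (_root_.enorm u / _root_.enorm v) := by
        field_simp

end MLP

theorem mlp_hidden_activation_ratio_general
    (L : ℕ) (n : ℕ → ℕ) (φ : ℝ → ℝ) (α β κ : ℝ)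
    (hα : 0 < α)
    (hφ1 : ∀ x : ℝ, α * |x| ≤ |φ x| ∧ |φ x| ≤ β * |x|)
    (W ΔW : ∀ l : ℕ, Matrix (Fin (n (l + 1))) (Fin (n l)) ℝ)
    (hcond : ∀ l < L, HasCondLE (W l) κ ∧ HasCondLE (W l + ΔW l) κ ∧ HasCondLE (ΔW l) κ)
    (x : Fin (n 0) → ℝ)
    (hnz : ∀ l ≤ L, mlpHidden φ n W x l ≠ 0 ∧ mlpHidden φ n (fun k => W k + ΔW k) x l ≠ 0) :
    ∀ l ≤ L,
      _root_.enorm (mlpHidden φ n (fun k => W k + ΔW k) x l) / _root_.enorm (mlpHidden φ n W x l) ≤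
        (β * κ ^ 2 / α) ^ l * ∏ k ∈ Finset.range l, (1 + frob (ΔW k) / frob (W k)) := by
  intro l
  induction l with
  | zero => simpa [mlpHidden] using div_self_le_one _
  | succ l ih =>
    intro hl
    have hlL : l ≤ L := Nat.le_of_succ_le hl
    have hβ : 0 ≤ β := MLP.nonneg_of_abs_le_mul_abs fun x => (hφ1 x).2
    have hr : 0 ≤ frob (ΔW l) / frob (W l) :=
      div_nonneg (MLP.frob_nonneg _) (MLP.frob_nonneg _)
    calc _ ≤ β * κ ^ 2 / α * (1 + frob (ΔW l) / frob (W l)) *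
          (_root_.enorm (mlpHidden φ n (fun k => W k + ΔW k) x l) /
            _root_.enorm (mlpHidden φ n W x l)) :=
          MLP.enorm_layer_ratio_le hα hφ1 (hcond l hl).1 (hcond l hl).2.2 (hnz l hlL).1 _
      _ ≤ β * κ ^ 2 / α * (1 + frob (ΔW l) / frob (W l)) *
          ((β * κ ^ 2 / α) ^ l * ∏ k ∈ Finset.range l, (1 + frob (ΔW k) / frob (W k))) := by
          gcongr
          exact ih hlL
      _ = (β * κ ^ 2 / α) ^ (l + 1) *
          ∏ k ∈ Finset.range (l + 1), (1 + frob (ΔW k) / frob (W k)) := by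
          rw [pow_succ, Finset.prod_range_succ]; ring

/-- Intermediate bound in Theorem 1(a): the ratio of perturbed to unperturbed hidden
activation norms at every layer `l ≤ L`. -/
theorem mlp_hidden_activation_ratio
    (L : ℕ) (n : ℕ → ℕ) (φ : ℝ → ℝ) (α β κ : ℝ)
    (hα : 0 < α) (hαβ : α ≤ β)
    (hφ1 : ∀ x : ℝ, α * |x| ≤ |φ x| ∧ |φ x| ≤ β * |x|)
    (hφ2 : ∀ x y : ℝ, α * |x - y| ≤ |φ x - φ y| ∧ |φ x - φ y| ≤ β * |x - y|)
    (W ΔW : ∀ l : ℕ, Matrix (Fin (n (l + 1))) (Fin (n l)) ℝ)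
    (hcond : ∀ l < L, HasCondLE (W l) κ ∧ HasCondLE (W l + ΔW l) κ ∧ HasCondLE (ΔW l) κ)
    (x : Fin (n 0) → ℝ) (hx : x ≠ 0)
    (hnz : ∀ l ≤ L, mlpHidden φ n W x l ≠ 0 ∧ mlpHidden φ n (fun k => W k + ΔW k) x l ≠ 0) :
    ∀ l ≤ L,
      _root_.enorm (mlpHidden φ n (fun k => W k + ΔW k) x l) / _root_.enorm (mlpHidden φ n W x l) ≤
        (β * κ ^ 2 / α) ^ l * ∏ k ∈ Finset.range l, (1 + frob (ΔW k) / frob (W k)) :=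
  mlp_hidden_activation_ratio_general L n φ α β κ hα hφ1 W ΔW hcond x hnz
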